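/- Let F: R^n → R be lower bounded on a set X (F(x) ≥ m_F for all x ∈ X), and let λ^k be a bounded sequence in R^m with ‖λ^k‖ ≤ M. Suppose the dual update λ^{k+1} = (1-τ)λ^k + ρ(Ax^{k+1} - b) holds with x^{k+1} ∈ X, τ ∈ (0,1), ρ > 0. Then the regularized augmented Lagrangian L⁺(x^{k+1}, λ^{k+1}) := F(x^{k+1}) + ⟨λ^{k+1}, Ax^{k+1} - b⟩ + (ρ/2)‖Ax^{k+1} - b‖² - (τ/(2ρ))‖λ^{k+1}‖² is bounded below by m_F - (τ/(2ρ))M² - ((1-τ)/(2ρ))M². -/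
import Mathlib


open scoped InnerProductSpace

theorem regularized_AL_lower_bounded {m n : ℕ} (τ ρ : ℝ)
    (hτ : τ ∈ Set.Ioo (0 : ℝ) 1) (hρ : 0 < ρ)
    (F : EuclideanSpace ℝ (Fin n) → ℝ) (X : Set (EuclideanSpace ℝ (Fin n)))
    (mF M : ℝ)
    (hF : ∀ x ∈ X, mF ≤ F x)
    (A : EuclideanSpace ℝ (Fin n) →L[ℝ] EuclideanSpace ℝ (Fin m))
    (b : EuclideanSpace ℝ (Fin m))
    (x : ℕ → EuclideanSpace ℝ (Fin n)) (lam : ℕ → EuclideanSpace ℝ (Fin m))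
    (hx : ∀ k : ℕ, x (k + 1) ∈ X)
    (hlam : ∀ k : ℕ, ‖lam k‖ ≤ M)
    (hupd : ∀ k : ℕ, lam (k + 1) = (1 - τ) • lam k + ρ • (A (x (k + 1)) - b)) :
    ∀ k : ℕ,
      F (x (k + 1)) + ⟪lam (k + 1), A (x (k + 1)) - b⟫_ℝ
          + (ρ / 2) * ‖A (x (k + 1)) - b‖ ^ 2
          - (τ / (2 * ρ)) * ‖lam (k + 1)‖ ^ 2
        ≥ mF - (τ / (2 * ρ)) * M ^ 2 - ((1 - τ) / (2 * ρ)) * M ^ 2 := by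
  intro k
  obtain ⟨hτ0, hτ1⟩ := hτ
  have key : ρ • (A (x (k+1)) - b) = lam (k+1) - (1-τ) • lam k := by
    rw [hupd k]; abel
  have hinner : ρ * ⟪lam (k+1), A (x (k+1)) - b⟫_ℝ
      = ‖lam (k+1)‖^2 - (1-τ) * ⟪lam (k+1), lam k⟫_ℝ := by
    have h := congrArg (fun v => ⟪lam (k+1), v⟫_ℝ) key
    simp only [real_inner_smul_right, inner_sub_right, real_inner_self_eq_norm_sq] at h
    rw [inner_sub_right]; exact h
  have hpolar : ⟪lam (k+1), lam k⟫_ℝ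
      = (‖lam (k+1)‖^2 + ‖lam k‖^2 - ‖lam (k+1) - lam k‖^2)/2 := by
    rw [@norm_sub_sq_real]; ring
  rw [hpolar] at hinner
  have hρ' : ρ ≠ 0 := ne_of_gt hρ
  have hinner' : ⟪lam (k+1), A (x (k+1)) - b⟫_ℝ
      = (‖lam (k+1)‖^2 - (1-τ) * ((‖lam (k+1)‖^2 + ‖lam k‖^2 - ‖lam (k+1) - lam k‖^2)/2)) / ρ := by
    rw [eq_div_iff hρ']
    linear_combination hinner
  have h1 : ‖lam k‖^2 ≤ M^2 := by
    nlinarith [hlam k, norm_nonneg (lam k)]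
  have h2 : (0:ℝ) ≤ ‖lam (k+1)‖^2 := sq_nonneg _
  have h3 : (0:ℝ) ≤ ‖lam (k+1) - lam k‖^2 := sq_nonneg _
  have h4 : (0:ℝ) ≤ ‖A (x (k+1)) - b‖^2 := sq_nonneg _
  have hM2 : (0:ℝ) ≤ M^2 := le_trans (sq_nonneg ‖lam k‖) h1
  have hF1 := hF _ (hx k)
  rw [hinner', ge_iff_le, ← sub_nonneg]
  have expand : F (x (k + 1)) + (‖lam (k+1)‖^2 - (1-τ) * ((‖lam (k+1)‖^2 + ‖lam k‖^2 - ‖lam (k+1) - lam k‖^2)/2)) / ρ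
          + (ρ / 2) * ‖A (x (k+1)) - b‖ ^ 2
          - (τ / (2 * ρ)) * ‖lam (k+1)‖ ^ 2
          - (mF - (τ / (2 * ρ)) * M ^ 2 - ((1 - τ) / (2 * ρ)) * M ^ 2)
      = (F (x (k+1)) - mF) + (ρ / 2) * ‖A (x (k+1)) - b‖ ^ 2
        + (τ / (2*ρ)) * ‖lam (k+1)‖^2 + ((1-τ)/(2*ρ)) * ‖lam (k+1)‖^2 + ((1-τ)/(2*ρ)) * ‖lam (k+1) - lam k‖^2
        + (τ / (2*ρ)) * M^2 + ((1-τ)/(2*ρ)) * (M^2 - ‖lam k‖^2) := by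
    field_simp
    ring
  rw [expand]
  have hτ' : (0:ℝ) ≤ 1 - τ := by linarith
  have t1 : (0:ℝ) ≤ (τ / (2*ρ)) := by positivity
  have t2 : (0:ℝ) ≤ ((1-τ)/(2*ρ)) := by positivity
  have t3 : (0:ℝ) ≤ M^2 - ‖lam k‖^2 := by linarith
  have t4 : (0:ℝ) ≤ ρ/2 := by positivity
  nlinarith [mul_nonneg t1 h2, mul_nonneg t2 h2, mul_nonneg t2 h3, mul_nonneg t1 hM2, mul_nonneg t2 t3, mul_nonneg t4 h4]
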